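/- Let Φ be a root system with base Δ, fundamental weight λ_p, Weyl vector ρ, longest element w_0 of W, parabolic subset Δ_p = Δ \ {α_p} with longest element w_p of W_p, and c_p = 2⟨λ_p - ρ_p, α_p^∨⟩. For a subset A ⊆ Φ and w ∈ W define S_{p,A}(s; w) = { ⟨λ_p, α^∨⟩ s + ⟨ρ, α^∨⟩ : α ∈ (w^{-1}A) \ Δ_p } (as a multiset of affine-linear functions of s). Then for A = Δ or A = Φ^-, one has S_{p,A}(-c_p - s; w) = S_{p,A}(s; w_0 w w_p). -/

import Mathlib

open scoped RealInnerProductSpace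

/-- A (reduced, crystallographic) root system `Φ` in a real inner product
space, together with a chosen base `Δ`. -/
structure RootSystemBase (V : Type*) [NormedAddCommGroup V]
    [InnerProductSpace ℝ V] where
  Φ : Set V
  finite : Φ.Finite
  zero_not_mem : (0 : V) ∉ Φ
  neg_mem : ∀ α ∈ Φ, -α ∈ Φ
  reduced : ∀ α ∈ Φ, ∀ t : ℝ, t • α ∈ Φ → t = 1 ∨ t = -1
  crystallographic : ∀ α ∈ Φ, ∀ β ∈ Φ, ∃ n : ℤ, (n : ℝ) = 2 * ⟪α, β⟫ / ⟪α, α⟫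
  reflect_mem : ∀ α ∈ Φ, ∀ β ∈ Φ, β - (2 * ⟪α, β⟫ / ⟪α, α⟫) • α ∈ Φ
  Δ : Finset V
  base_subset : ↑Δ ⊆ Φ
  base_indep : LinearIndependent ℝ (fun α : Δ => (α : V))
  base_pos_neg : ∀ α ∈ Φ,
    (∃ c : V → ℝ, (∀ β, 0 ≤ c β) ∧ α = ∑ β ∈ Δ, c β • β) ∨
    (∃ c : V → ℝ, (∀ β, 0 ≤ c β) ∧ α = -∑ β ∈ Δ, c β • β)

namespace RootSystemBase

variable {V : Type*} [NormedAddCommGroup V] [InnerProductSpace ℝ V]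
  (R : RootSystemBase V)

/-- The positive roots determined by the base `Δ`. -/
def posRoots : Set V :=
  {α ∈ R.Φ | ∃ c : V → ℝ, (∀ β, 0 ≤ c β) ∧ α = ∑ β ∈ R.Δ, c β • β}

/-- The negative roots determined by the base `Δ`. -/
def negRoots : Set V := {α | -α ∈ R.posRoots}

/-- The pairing `⟨x, α^∨⟩ = 2⟪x, α⟫/⟪α, α⟫` with the coroot `α^∨`. -/
noncomputable def copair (x α : V) : ℝ := 2 * ⟪x, α⟫ / ⟪α, α⟫

/-- The Weyl group: the subgroup of linear automorphisms of `V` generated by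
the reflections `s_α : x ↦ x - ⟨x, α^∨⟩ α` in the roots `α ∈ Φ`. -/
def weylGroup : Subgroup (V ≃ₗ[ℝ] V) :=
  Subgroup.closure
    {w | ∃ α ∈ R.Φ, ∀ x, w x = x - (2 * ⟪α, x⟫ / ⟪α, α⟫) • α}

/-- The length `ℓ(w) = |Φ_w|` where `Φ_w = Φ⁺ ∩ w⁻¹Φ⁻`. -/
noncomputable def length (w : V ≃ₗ[ℝ] V) : ℕ :=
  (R.posRoots ∩ ⇑w ⁻¹' R.negRoots).ncard

/-- `w₀` is a longest element of the Weyl group. -/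
def IsLongest (w₀ : V ≃ₗ[ℝ] V) : Prop :=
  w₀ ∈ R.weylGroup ∧ ∀ w ∈ R.weylGroup, R.length w ≤ R.length w₀

/-- The parabolic root subsystem `Φ_p` generated by `Δ_p = Δ \ {α_p}`:
the roots in the span of `Δ_p`. -/
def paraRoots (αp : V) : Set V :=
  R.Φ ∩ (Submodule.span ℝ (↑R.Δ \ {αp}) : Set V)

/-- The parabolic Weyl group `W_p`, generated by the reflections in `Φ_p`. -/
def paraWeylGroup (αp : V) : Subgroup (V ≃ₗ[ℝ] V) :=
  Subgroup.closure
    {w | ∃ α ∈ R.paraRoots αp, ∀ x, w x = x - (2 * ⟪α, x⟫ / ⟪α, α⟫) • α}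

/-- The length function of the parabolic subsystem `Φ_p`. -/
noncomputable def paraLength (αp : V) (w : V ≃ₗ[ℝ] V) : ℕ :=
  ((R.posRoots ∩ R.paraRoots αp) ∩ ⇑w ⁻¹' (R.negRoots ∩ R.paraRoots αp)).ncard

/-- `w_p` is a longest element of the parabolic Weyl group `W_p`. -/
def IsParaLongest (αp : V) (wp : V ≃ₗ[ℝ] V) : Prop :=
  wp ∈ R.paraWeylGroup αp ∧
    ∀ w ∈ R.paraWeylGroup αp, R.paraLength αp w ≤ R.paraLength αp wp

end RootSystemBase

/-!
The map `x ↦ -w_p⁻¹ x` carries `(w⁻¹A) \ Δ_p` onto `((w₀ w w_p)⁻¹A) \ Δ_p`, because `-w₀`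
preserves `A` and `-w_p` permutes `Δ_p`. Both facts come from the same source: a longest element
sends every positive root to a negative one (a simple `β` with `w₀ β > 0` would give
`ℓ(w₀ s_β) = ℓ(w₀) + 1`), so its negative permutes the positive roots additively and hence also the
simple roots, which are exactly the positive roots that are not sums of two positive roots.

Along this map the affine function of `x` becomes its composite with `s ↦ -c_p - s`: `w_p` leaves
`⟨λ_p, ·⟩` unchanged since it moves vectors only within `span Δ_p ⊥ λ_p`; `w_p ρ = ρ - 2ρ_p` since
`w_p` permutes `Φ⁺ \ Φ_p` while `-w_p` permutes `Φ_p⁺`; and `c_p λ_p - 2ρ + 2ρ_p` pairs to zero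
with every simple coroot, hence is orthogonal to every root.
-/

lemma image_eq_self_of_mapsTo {α : Type*} {s : Set α} (hs : s.Finite) {f : α → α}
    (hf : Set.InjOn f s) (h : Set.MapsTo f s s) : f '' s = s :=
  ((hs.injOn_iff_bijOn_of_mapsTo h).mp hf).image_eq

lemma map_finsum_mem_self_of_image_eq {M : Type*} [AddCommMonoid M] {s : Set M}
    (hs : s.Finite) (g : M →+ M) (hg : Set.InjOn g s) (h : g '' s = s) :
    g (∑ᶠ α ∈ s, α) = ∑ᶠ α ∈ s, α := by
  rw [g.map_finsum_mem _ hs, ← finsum_mem_image (f := fun α => α) hg, h]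

namespace RootSystemBase

open Set Function Submodule

variable {V : Type*} [NormedAddCommGroup V] [InnerProductSpace ℝ V] {R : RootSystemBase V}

section Coroot

noncomputable def coroot (α : V) : Module.Dual ℝ V := (2 / ⟪α, α⟫) • innerₛₗ ℝ α

lemma coroot_apply (α x : V) : coroot α x = copair x α := by
  simp only [coroot, copair, LinearMap.smul_apply, innerₛₗ_apply_apply, smul_eq_mul,
    real_inner_comm]
  ring

lemma copair_sub_left (x y α : V) : copair (x - y) α = copair x α - copair y α := by
  simp only [← coroot_apply, map_sub]

lemma copair_add_left (x y α : V) : copair (x + y) α = copair x α + copair y α := by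
  simp only [← coroot_apply, map_add]

lemma copair_smul_left (c : ℝ) (x α : V) : copair (c • x) α = c * copair x α := by
  simp only [← coroot_apply, map_smul, smul_eq_mul]

lemma copair_neg_right (x α : V) : copair x (-α) = -copair x α := by
  simp only [copair, inner_neg_right, inner_neg_left, neg_neg, neg_div, mul_neg]

lemma copair_self {α : V} (hα : α ≠ 0) : copair α α = 2 := by
  rw [copair, mul_div_assoc, div_self (inner_self_ne_zero.mpr hα), mul_one]

lemma copair_eq_zero_iff {α : V} (hα : α ≠ 0) (x : V) : copair x α = 0 ↔ ⟪x, α⟫ = 0 := by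
  simp [copair, hα]

noncomputable def rootReflection {α : V} (hα : α ≠ 0) : V ≃ₗ[ℝ] V :=
  Module.reflection (x := α) (f := coroot α) (by rw [coroot_apply, copair_self hα])

lemma rootReflection_apply {α : V} (hα : α ≠ 0) (x : V) :
    rootReflection hα x = x - copair x α • α := by
  rw [rootReflection, Module.reflection_apply, coroot_apply]

lemma rootReflection_apply_self {α : V} (hα : α ≠ 0) : rootReflection hα α = -α :=
  Module.reflection_apply_self _

lemma rootReflection_involutive {α : V} (hα : α ≠ 0) : Involutive (rootReflection hα) :=
  Module.involutive_reflection _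

lemma copair_rootReflection {α : V} (hα : α ≠ 0) (x : V) :
    copair (rootReflection hα x) α = -copair x α := by
  rw [rootReflection_apply, copair_sub_left, copair_smul_left, copair_self hα]
  ring

lemma eq_rootReflection {α : V} (hα : α ≠ 0) {w : V ≃ₗ[ℝ] V}
    (hw : ∀ x, w x = x - (2 * ⟪α, x⟫ / ⟪α, α⟫) • α) : w = rootReflection hα := by
  ext x
  rw [hw, rootReflection_apply, copair, real_inner_comm]

end Coroot

section Basic

lemma ne_zero_of_mem {α : V} (hα : α ∈ R.Φ) : α ≠ 0 :=
  fun h => R.zero_not_mem (h ▸ hα)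

variable (R) in
lemma sum_smul_base_injective {c d : V → ℝ}
    (h : ∑ β ∈ R.Δ, c β • β = ∑ β ∈ R.Δ, d β • β) : ∀ β ∈ R.Δ, c β = d β := by
  intro β hβ
  refine linearIndependent_iff'ₛ.mp R.base_indep Finset.univ (c ·) (d ·) ?_ ⟨β, hβ⟩
    (Finset.mem_univ _)
  simpa only [Finset.sum_coe_sort R.Δ fun β => c β • β, Finset.sum_coe_sort R.Δ fun β => d β • β]

variable (R) in
lemma posRoots_subset : R.posRoots ⊆ R.Φ := fun _ h => h.1

@[simp] lemma neg_mem_negRoots {α : V} : -α ∈ R.negRoots ↔ α ∈ R.posRoots := by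
  simp [negRoots]

variable (R) in
lemma negRoots_subset : R.negRoots ⊆ R.Φ := fun α h => by
  simpa using R.neg_mem _ (R.posRoots_subset h)

variable (R) in
lemma posRoots_finite : R.posRoots.Finite := R.finite.subset R.posRoots_subset

lemma mem_posRoots_or_mem_negRoots {α : V} (hα : α ∈ R.Φ) :
    α ∈ R.posRoots ∨ α ∈ R.negRoots := by
  rcases R.base_pos_neg α hα with ⟨c, hc, hrep⟩ | ⟨c, hc, hrep⟩
  · exact Or.inl ⟨hα, c, hc, hrep⟩
  · exact Or.inr ⟨R.neg_mem _ hα, c, hc, by rw [hrep, neg_neg]⟩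

lemma coeff_nonpos_of_mem_negRoots {α : V} (hα : α ∈ R.negRoots) {c : V → ℝ}
    (hc : α = ∑ β ∈ R.Δ, c β • β) {δ : V} (hδ : δ ∈ R.Δ) : c δ ≤ 0 := by
  obtain ⟨-, d, hd, hrep⟩ := hα
  have : c δ = -d δ := R.sum_smul_base_injective (c := c) (d := (-d ·)) (by
    simp only [neg_smul, Finset.sum_neg_distrib, ← hrep, ← hc, neg_neg]) δ hδ
  linarith [hd δ]

lemma eq_of_coeff_eq_zero_of_ne {γ : V} (hγ : γ ∈ R.Φ) {c : V → ℝ} (hc : ∀ β, 0 ≤ c β)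
    (hrep : γ = ∑ β ∈ R.Δ, c β • β) {β : V} (hβ : β ∈ R.Δ)
    (h : ∀ δ ∈ R.Δ, δ ≠ β → c δ = 0) : γ = β := by
  have hγβ : γ = c β • β := by
    rw [hrep]
    exact Finset.sum_eq_single β (fun δ hδ hδβ => by rw [h δ hδ hδβ, zero_smul]) (absurd hβ)
  rcases R.reduced β (R.base_subset hβ) (c β) (hγβ ▸ hγ) with h1 | h1
  · rw [hγβ, h1, one_smul]
  · linarith [hc β]

lemma mem_posRoots_of_coeff_pos {α : V} (hα : α ∈ R.Φ) {c : V → ℝ}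
    (hc : α = ∑ β ∈ R.Δ, c β • β) {δ : V} (hδ : δ ∈ R.Δ) (hcδ : 0 < c δ) :
    α ∈ R.posRoots :=
  (mem_posRoots_or_mem_negRoots hα).resolve_right
    fun h => (coeff_nonpos_of_mem_negRoots h hc hδ).not_gt hcδ

lemma notMem_negRoots_of_mem_posRoots {α : V} (hα : α ∈ R.posRoots) : α ∉ R.negRoots := by
  obtain ⟨hαΦ, c, hc, hrep⟩ := hα
  intro hαN
  refine ne_zero_of_mem hαΦ (hrep.trans (Finset.sum_eq_zero fun β hβ => ?_))
  rw [le_antisymm (coeff_nonpos_of_mem_negRoots hαN hrep hβ) (hc β), zero_smul]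

lemma neg_notMem_posRoots {α : V} (hα : α ∈ R.posRoots) : -α ∉ R.posRoots :=
  fun h => notMem_negRoots_of_mem_posRoots h (by rwa [neg_mem_negRoots])

open Classical in
lemma sum_ite_smul_base {β : V} (hβ : β ∈ R.Δ) (a : ℝ) :
    ∑ γ ∈ R.Δ, (if γ = β then a else 0) • γ = a • β := by
  simp [hβ]

lemma mem_posRoots_of_mem_base {β : V} (hβ : β ∈ R.Δ) : β ∈ R.posRoots := by
  classical
  exact ⟨R.base_subset hβ, fun γ => if γ = β then 1 else 0,
    fun γ => ite_nonneg zero_le_one le_rfl, by rw [sum_ite_smul_base hβ, one_smul]⟩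

variable (R) in
lemma mem_span_base {α : V} (hα : α ∈ R.Φ) : α ∈ span ℝ (R.Δ : Set V) := by
  have hsum (c : V → ℝ) : ∑ β ∈ R.Δ, c β • β ∈ span ℝ (R.Δ : Set V) :=
    sum_mem fun β hβ => smul_mem _ _ (subset_span hβ)
  rcases R.base_pos_neg α hα with ⟨c, -, rfl⟩ | ⟨c, -, rfl⟩
  exacts [hsum c, Submodule.neg_mem _ (hsum c)]

end Basic

section WeylGroup

lemma rootReflection_mem_weylGroup {α : V} (hα : α ∈ R.Φ) :
    rootReflection (ne_zero_of_mem hα) ∈ R.weylGroup :=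
  Subgroup.subset_closure ⟨α, hα, fun x => by rw [rootReflection_apply, copair, real_inner_comm]⟩

@[elab_as_elim]
lemma weylGroup_induction {p : (g : V ≃ₗ[ℝ] V) → g ∈ R.weylGroup → Prop}
    (reflection : ∀ α (hα : α ∈ R.Φ),
      p (rootReflection (ne_zero_of_mem hα)) (rootReflection_mem_weylGroup hα))
    (one : p 1 (one_mem _))
    (mul : ∀ g h hg hh, p g hg → p h hh → p (g * h) (mul_mem hg hh)) {g : V ≃ₗ[ℝ] V}
    (hg : g ∈ R.weylGroup) : p g hg := by
  induction hg using Subgroup.closure_induction'' with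
  | mem w hw =>
    obtain ⟨α, hα, hwα⟩ := hw
    obtain rfl := eq_rootReflection (ne_zero_of_mem hα) hwα
    exact reflection α hα
  | inv_mem w hw =>
    obtain ⟨α, hα, hwα⟩ := hw
    obtain rfl := eq_rootReflection (ne_zero_of_mem hα) hwα
    exact reflection α hα
  | one => exact one
  | mul g h hg' hh' hg hh => exact mul g h hg' hh' hg hh

lemma inner_apply_apply_of_mem_weylGroup {g : V ≃ₗ[ℝ] V} (hg : g ∈ R.weylGroup) (x y : V) :
    ⟪g x, g y⟫ = ⟪x, y⟫ := by
  induction hg using weylGroup_induction generalizing x y with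
  | reflection α hα =>
    have hαα : ⟪α, α⟫ ≠ 0 := inner_self_ne_zero.mpr (ne_zero_of_mem hα)
    simp only [rootReflection_apply, copair, inner_sub_left, inner_sub_right,
      real_inner_smul_left, real_inner_smul_right, real_inner_comm α]
    field_simp
    ring
  | one => rfl
  | mul g h _ _ hg hh => exact (hg _ _).trans (hh x y)

lemma copair_apply_apply_of_mem_weylGroup {g : V ≃ₗ[ℝ] V} (hg : g ∈ R.weylGroup) (x y : V) :
    copair (g x) (g y) = copair x y := by
  simp only [copair, inner_apply_apply_of_mem_weylGroup hg]

lemma mapsTo_of_mem_weylGroup {g : V ≃ₗ[ℝ] V} (hg : g ∈ R.weylGroup) : MapsTo g R.Φ R.Φ := by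
  induction hg using weylGroup_induction with
  | reflection α hα =>
    intro β hβ
    rw [rootReflection_apply, copair, real_inner_comm]
    exact R.reflect_mem α hα β hβ
  | one => exact mapsTo_id _
  | mul g h _ _ hg hh => exact hg.comp hh

lemma apply_mem_iff_of_mem_weylGroup {g : V ≃ₗ[ℝ] V} (hg : g ∈ R.weylGroup) {x : V} :
    g x ∈ R.Φ ↔ x ∈ R.Φ := by
  refine ⟨fun h => ?_, fun h => mapsTo_of_mem_weylGroup hg h⟩
  simpa using mapsTo_of_mem_weylGroup (inv_mem hg) h

end WeylGroup

section SimpleReflection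

lemma rootReflection_mapsTo_posRoots_diff {β : V} (hβ : β ∈ R.Δ) :
    MapsTo (rootReflection (ne_zero_of_mem (R.base_subset hβ)))
      (R.posRoots \ {β}) (R.posRoots \ {β}) := by
  classical
  have hβ0 := ne_zero_of_mem (R.base_subset hβ)
  set s := rootReflection hβ0
  rintro γ ⟨⟨hγΦ, c, hc, hrep⟩, hγβ : γ ≠ β⟩
  obtain ⟨δ, hδ, hδβ, hcδ⟩ : ∃ δ ∈ R.Δ, δ ≠ β ∧ 0 < c δ := by
    by_contra! h
    exact hγβ (eq_of_coeff_eq_zero_of_ne hγΦ hc hrep hβ fun δ hδ hδβ =>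
      le_antisymm (h δ hδ hδβ) (hc δ))
  set c' : V → ℝ := fun v => c v - if v = β then copair γ β else 0
  have hsγ : s γ = ∑ v ∈ R.Δ, c' v • v := by
    simp only [c', sub_smul, Finset.sum_sub_distrib, sum_ite_smul_base hβ, ← hrep, s,
      rootReflection_apply]
  refine ⟨mem_posRoots_of_coeff_pos (mapsTo_of_mem_weylGroup
    (rootReflection_mem_weylGroup (R.base_subset hβ)) hγΦ) hsγ hδ (by simpa [c', hδβ]),
    fun hsγβ => ?_⟩
  rw [mem_singleton_iff, (rootReflection_involutive hβ0).eq_iff,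
    rootReflection_apply_self] at hsγβ
  exact neg_notMem_posRoots (mem_posRoots_of_mem_base hβ) (hsγβ ▸ ⟨hγΦ, c, hc, hrep⟩)

lemma rootReflection_image_posRoots_diff {β : V} (hβ : β ∈ R.Δ) :
    rootReflection (ne_zero_of_mem (R.base_subset hβ)) '' (R.posRoots \ {β})
      = R.posRoots \ {β} :=
  (Module.bijOn_reflection_of_mapsTo _ (rootReflection_mapsTo_posRoots_diff hβ)).image_eq

end SimpleReflection

variable (R) in
noncomputable def weylVector : V := (2⁻¹ : ℝ) • ∑ᶠ α ∈ R.posRoots, α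

variable (R) in
lemma copair_weylVector {β : V} (hβ : β ∈ R.Δ) : copair R.weylVector β = 1 := by
  have hβ0 := ne_zero_of_mem (R.base_subset hβ)
  have hfin : (R.posRoots \ {β}).Finite := R.posRoots_finite.sdiff
  have hsplit : ∑ᶠ α ∈ R.posRoots, α = β + ∑ᶠ α ∈ R.posRoots \ {β}, α := by
    rw [← finsum_mem_insert (fun α => α) (fun h => h.2 rfl) hfin, insert_sdiff_singleton,
      insert_eq_of_mem (mem_posRoots_of_mem_base hβ)]
  set S := ∑ᶠ α ∈ R.posRoots \ {β}, α
  -- `s_β` permutes the positive roots other than `β`, so it fixes `S`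
  have hS : copair S β = 0 := by
    have h := copair_rootReflection hβ0 S
    rw [show rootReflection hβ0 S = S from map_finsum_mem_self_of_image_eq hfin
      (rootReflection hβ0).toAddMonoidHom (rootReflection hβ0).injective.injOn
      (rootReflection_image_posRoots_diff hβ)] at h
    linarith
  rw [weylVector, copair_smul_left, hsplit, copair_add_left, copair_self hβ0, hS]
  norm_num

section Longest

lemma mapsTo_posRoots_negRoots_of_base {g : V ≃ₗ[ℝ] V} (hg : MapsTo g R.Φ R.Φ)
    (h : ∀ β ∈ R.Δ, g β ∈ R.negRoots) : MapsTo g R.posRoots R.negRoots := by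
  rintro α ⟨hαΦ, c, hc, hrep⟩
  choose! d hd hgd using fun β hβ => (h β hβ).2
  refine ⟨R.neg_mem _ (hg hαΦ), fun δ => ∑ β ∈ R.Δ, c β * d β δ,
    fun δ => Finset.sum_nonneg fun β hβ => mul_nonneg (hc β) (hd β hβ δ), ?_⟩
  calc -g α = ∑ β ∈ R.Δ, c β • -g β := by
        simp only [hrep, map_sum, map_smul, smul_neg, Finset.sum_neg_distrib]
    _ = ∑ β ∈ R.Δ, c β • ∑ δ ∈ R.Δ, d β δ • δ :=
        Finset.sum_congr rfl fun β hβ => by rw [hgd β hβ]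
    _ = ∑ δ ∈ R.Δ, (∑ β ∈ R.Δ, c β * d β δ) • δ := by
        simp only [Finset.smul_sum, smul_smul, Finset.sum_smul]
        exact Finset.sum_comm

lemma length_mul_rootReflection {w : V ≃ₗ[ℝ] V} {β : V} (hβ : β ∈ R.Δ)
    (hwβ : w β ∈ R.posRoots) :
    R.length (w * rootReflection (ne_zero_of_mem (R.base_subset hβ))) = R.length w + 1 := by
  have hβ0 := ne_zero_of_mem (R.base_subset hβ)
  set s := rootReflection hβ0
  have hinv : R.posRoots ∩ ⇑(w * s) ⁻¹' R.negRoots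
      = insert β (s '' (R.posRoots ∩ ⇑w ⁻¹' R.negRoots)) := by
    ext α
    constructor
    · rintro ⟨hα, hwsα⟩
      by_cases hαβ : α = β
      · exact Or.inl hαβ
      · exact Or.inr ⟨s α, ⟨(rootReflection_mapsTo_posRoots_diff hβ ⟨hα, hαβ⟩).1, hwsα⟩,
          rootReflection_involutive hβ0 α⟩
    · rintro (rfl | ⟨γ, ⟨hγ, hwγ⟩, rfl⟩)
      · refine ⟨mem_posRoots_of_mem_base hβ, ?_⟩
        simpa [s, rootReflection_apply_self] using hwβ
      · have hγβ : γ ≠ β := by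
          rintro rfl
          exact notMem_negRoots_of_mem_posRoots hwβ hwγ
        exact ⟨(rootReflection_mapsTo_posRoots_diff hβ ⟨hγ, hγβ⟩).1,
          by simpa [s, rootReflection_involutive hβ0 γ] using hwγ⟩
  have hβ_notMem : β ∉ s '' (R.posRoots ∩ ⇑w ⁻¹' R.negRoots) := by
    rintro ⟨γ, ⟨hγ, -⟩, hsγ⟩
    rw [(rootReflection_involutive hβ0).eq_iff, rootReflection_apply_self] at hsγ
    exact neg_notMem_posRoots (mem_posRoots_of_mem_base hβ) (hsγ ▸ hγ)
  rw [length, hinv, ncard_insert_of_notMem hβ_notMem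
    ((R.posRoots_finite.subset inter_subset_left).image _),
    ncard_image_of_injective _ s.injective, length]

lemma IsLongest.mapsTo_posRoots_negRoots {w₀ : V ≃ₗ[ℝ] V} (hw₀ : R.IsLongest w₀) :
    MapsTo w₀ R.posRoots R.negRoots := by
  refine mapsTo_posRoots_negRoots_of_base (mapsTo_of_mem_weylGroup hw₀.1) fun β hβ => ?_
  refine (mem_posRoots_or_mem_negRoots
    (mapsTo_of_mem_weylGroup hw₀.1 (R.base_subset hβ))).resolve_left fun hpos => ?_
  have := hw₀.2 _ (mul_mem hw₀.1 (rootReflection_mem_weylGroup (R.base_subset hβ)))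
  rw [length_mul_rootReflection hβ hpos] at this
  omega

lemma IsLongest.neg_image_posRoots {w₀ : V ≃ₗ[ℝ] V} (hw₀ : R.IsLongest w₀) :
    (fun x => -w₀ x) '' R.posRoots = R.posRoots :=
  image_eq_self_of_mapsTo R.posRoots_finite (neg_injective.comp w₀.injective).injOn
    fun _ hα => hw₀.mapsTo_posRoots_negRoots hα

lemma IsLongest.apply_mem_negRoots_iff {w₀ : V ≃ₗ[ℝ] V} (hw₀ : R.IsLongest w₀) {x : V} :
    w₀ x ∈ R.negRoots ↔ -x ∈ R.negRoots := by
  show -w₀ x ∈ R.posRoots ↔ _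
  rw [neg_mem_negRoots]
  conv_lhs => rw [← hw₀.neg_image_posRoots]
  exact (neg_injective.comp w₀.injective).mem_set_image

lemma sub_mem_of_inner_pos {α β : V} (hα : α ∈ R.Φ) (hβ : β ∈ R.Φ) (hpos : 0 < ⟪α, β⟫)
    (hne : α ≠ β) : α - β ∈ R.Φ := by
  have hαα : 0 < ⟪α, α⟫ := real_inner_self_pos.mpr (ne_zero_of_mem hα)
  have hββ : 0 < ⟪β, β⟫ := real_inner_self_pos.mpr (ne_zero_of_mem hβ)
  obtain ⟨n, hn⟩ := R.crystallographic α hα β hβ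
  obtain ⟨m, hm⟩ := R.crystallographic β hβ α hα
  rw [real_inner_comm] at hm
  have hn0 : (0 : ℝ) < n := by rw [hn]; positivity
  have hm0 : (0 : ℝ) < m := by rw [hm]; positivity
  rcases (by norm_cast at hn0 hm0; omega : n = 1 ∨ m = 1 ∨ (2 ≤ n ∧ 2 ≤ m))
    with h | h | ⟨hn2, hm2⟩
  · have := R.reflect_mem α hα β hβ
    rw [← hn, h, Int.cast_one, one_smul] at this
    simpa using R.neg_mem _ this
  · have := R.reflect_mem β hβ α hα
    rwa [real_inner_comm α β, ← hm, h, Int.cast_one, one_smul] at this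
  · -- otherwise `⟪α, α⟫ ≤ ⟪α, β⟫ ≥ ⟪β, β⟫`, which forces `α = β`
    have h1 : ⟪α, α⟫ ≤ ⟪α, β⟫ := by
      have : (2 : ℝ) ≤ 2 * ⟪α, β⟫ / ⟪α, α⟫ := hn ▸ (by exact_mod_cast hn2)
      rw [le_div_iff₀ hαα] at this
      linarith
    have h2 : ⟪β, β⟫ ≤ ⟪α, β⟫ := by
      have : (2 : ℝ) ≤ 2 * ⟪α, β⟫ / ⟪β, β⟫ := hm ▸ (by exact_mod_cast hm2)
      rw [le_div_iff₀ hββ] at this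
      linarith
    refine absurd (sub_eq_zero.mp (real_inner_self_nonpos.mp ?_)) hne
    rw [inner_sub_left, inner_sub_right, inner_sub_right, real_inner_comm α β]
    linarith

lemma ne_add_of_mem_base {α x y : V} (hα : α ∈ R.Δ) (hx : x ∈ R.posRoots)
    (hy : y ∈ R.posRoots) : α ≠ x + y := by
  classical
  obtain ⟨hxΦ, c, hc, hcx⟩ := hx
  obtain ⟨hyΦ, d, hd, hdy⟩ := hy
  intro hαxy
  have hcoeff := R.sum_smul_base_injective (c := fun δ => if δ = α then 1 else 0)
    (d := fun δ => c δ + d δ) (by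
      rw [sum_ite_smul_base hα, one_smul, hαxy]
      simp only [add_smul, Finset.sum_add_distrib, ← hcx, ← hdy])
  have hzero (δ : V) (hδ : δ ∈ R.Δ) (hδα : δ ≠ α) : c δ = 0 ∧ d δ = 0 := by
    have := hcoeff δ hδ
    simp only [hδα, if_false] at this
    constructor <;> linarith [hc δ, hd δ]
  have hxα := eq_of_coeff_eq_zero_of_ne hxΦ hc hcx hα fun δ hδ hδα => (hzero δ hδ hδα).1
  have hyα := eq_of_coeff_eq_zero_of_ne hyΦ hd hdy hα fun δ hδ hδα => (hzero δ hδ hδα).2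
  refine ne_zero_of_mem (R.base_subset hα) ?_
  rw [hxα, hyα] at hαxy
  simpa using hαxy

lemma mem_base_of_forall_ne_add {δ : V} (hδ : δ ∈ R.posRoots)
    (h : ∀ x ∈ R.posRoots, ∀ y ∈ R.posRoots, δ ≠ x + y) : δ ∈ R.Δ := by
  obtain ⟨hδΦ, c, hc, hrep⟩ := hδ
  obtain ⟨β, hβ, hδβ⟩ : ∃ β ∈ R.Δ, 0 < ⟪δ, β⟫ := by
    by_contra! hle
    have : ⟪δ, δ⟫ ≤ 0 := calc
      ⟪δ, δ⟫ = ∑ β ∈ R.Δ, c β * ⟪δ, β⟫ := by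
        nth_rw 2 [hrep]
        simp only [inner_sum, real_inner_smul_right]
      _ ≤ 0 := Finset.sum_nonpos fun β hβ => mul_nonpos_of_nonneg_of_nonpos (hc β) (hle β hβ)
    exact ne_zero_of_mem hδΦ (real_inner_self_nonpos.mp this)
  by_cases hδβ' : δ = β
  · exact hδβ' ▸ hβ
  rcases mem_posRoots_or_mem_negRoots (sub_mem_of_inner_pos hδΦ (R.base_subset hβ) hδβ hδβ')
    with hpos | hneg
  · exact absurd (sub_add_cancel δ β).symm (h _ hpos β (mem_posRoots_of_mem_base hβ))
  · refine absurd ?_ (ne_add_of_mem_base hβ hneg ⟨hδΦ, c, hc, hrep⟩)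
    abel

lemma mem_base_iff {δ : V} :
    δ ∈ R.Δ ↔ δ ∈ R.posRoots ∧ ∀ x ∈ R.posRoots, ∀ y ∈ R.posRoots, δ ≠ x + y :=
  ⟨fun hδ => ⟨mem_posRoots_of_mem_base hδ, fun _ hx _ hy => ne_add_of_mem_base hδ hx hy⟩,
    fun h => mem_base_of_forall_ne_add h.1 h.2⟩

lemma image_base_eq_of_image_posRoots_eq {f : V →+ V} (hf : Injective f)
    (h : f '' R.posRoots = R.posRoots) : f '' R.Δ = R.Δ := by
  refine image_eq_self_of_mapsTo R.Δ.finite_toSet hf.injOn fun δ hδ => ?_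
  rw [Finset.mem_coe, mem_base_iff] at hδ ⊢
  refine ⟨h ▸ mem_image_of_mem f hδ.1, ?_⟩
  rw [← h]
  rintro _ ⟨x, hx, rfl⟩ _ ⟨y, hy, rfl⟩ hxy
  exact hδ.2 x hx y hy (hf (by rw [hxy, map_add]))

lemma IsLongest.apply_mem_base_iff {w₀ : V ≃ₗ[ℝ] V} (hw₀ : R.IsLongest w₀) {x : V} :
    w₀ x ∈ R.Δ ↔ -x ∈ R.Δ := by
  have hf : Injective (-(w₀ : V →+ V)) := neg_injective.comp w₀.injective
  rw [← Finset.mem_coe, ← Finset.mem_coe (s := R.Δ)]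
  conv_rhs => rw [← hf.mem_set_image, image_base_eq_of_image_posRoots_eq hf hw₀.neg_image_posRoots]
  simp

end Longest

section Parabolic

open Classical

variable {αp : V}

lemma sum_smul_eq_add_sum_erase (hαp : αp ∈ R.Δ) (c : V → ℝ) :
    ∑ β ∈ R.Δ, c β • β = c αp • αp + ∑ β ∈ R.Δ.erase αp, c β • β :=
  (Finset.add_sum_erase _ _ hαp).symm

lemma sum_erase_smul_eq_sum_update (hαp : αp ∈ R.Δ) (c : V → ℝ) :
    ∑ β ∈ R.Δ.erase αp, c β • β = ∑ β ∈ R.Δ, update c αp 0 β • β := by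
  rw [sum_smul_eq_add_sum_erase hαp, update_self, zero_smul, zero_add]
  exact Finset.sum_congr rfl fun β hβ => by rw [update_of_ne (Finset.ne_of_mem_erase hβ)]

lemma sum_erase_smul_mem_span (c : V → ℝ) :
    ∑ β ∈ R.Δ.erase αp, c β • β ∈ span ℝ (↑R.Δ \ {αp}) :=
  sum_mem fun β hβ => smul_mem _ _ (subset_span (by simpa [and_comm] using hβ))

lemma sum_smul_mem_span_iff (hαp : αp ∈ R.Δ) (c : V → ℝ) :
    ∑ β ∈ R.Δ, c β • β ∈ span ℝ (↑R.Δ \ {αp}) ↔ c αp = 0 := by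
  refine ⟨fun h => ?_, fun h => ?_⟩
  · rw [← Finset.coe_erase] at h
    obtain ⟨f, -, hf⟩ := mem_span_finset.mp h
    rw [sum_erase_smul_eq_sum_update hαp] at hf
    simpa using R.sum_smul_base_injective hf.symm αp hαp
  · rw [sum_smul_eq_add_sum_erase hαp, h, zero_smul, zero_add]
    exact sum_erase_smul_mem_span c

lemma neg_mem_paraRoots {α : V} : -α ∈ R.paraRoots αp ↔ α ∈ R.paraRoots αp := by
  simp only [paraRoots, mem_inter_iff, SetLike.mem_coe, Submodule.neg_mem_iff]
  exact and_congr_left fun _ => ⟨fun h => by simpa using R.neg_mem _ h, R.neg_mem _⟩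

noncomputable def paraSystem (hαp : αp ∈ R.Δ) : RootSystemBase V where
  Φ := R.paraRoots αp
  finite := R.finite.subset inter_subset_left
  zero_not_mem h := R.zero_not_mem h.1
  neg_mem _ hα := neg_mem_paraRoots.mpr hα
  reduced α hα t ht := R.reduced α hα.1 t ht.1
  crystallographic α hα β hβ := R.crystallographic α hα.1 β hβ.1
  reflect_mem α hα β hβ :=
    ⟨R.reflect_mem α hα.1 β hβ.1, sub_mem hβ.2 (smul_mem _ _ hα.2)⟩
  Δ := R.Δ.erase αp
  base_subset β hβ := ⟨R.base_subset (Finset.mem_of_mem_erase hβ),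
    subset_span (by simpa [and_comm] using hβ)⟩
  base_indep := R.base_indep.comp
    (fun β : R.Δ.erase αp => (⟨β.1, Finset.mem_of_mem_erase β.2⟩ : R.Δ))
    fun _ _ h => Subtype.ext (Subtype.mk.inj h)
  base_pos_neg α hα := by
    have h (c : V → ℝ) (hc : ∑ β ∈ R.Δ, c β • β ∈ span ℝ (↑R.Δ \ {αp})) :
        ∑ β ∈ R.Δ, c β • β = ∑ β ∈ R.Δ.erase αp, c β • β := by
      rw [sum_smul_eq_add_sum_erase hαp, (sum_smul_mem_span_iff hαp c).mp hc, zero_smul,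
        zero_add]
    rcases R.base_pos_neg α hα.1 with ⟨c, hc, rfl⟩ | ⟨c, hc, hrep⟩
    · exact Or.inl ⟨c, hc, h c hα.2⟩
    · refine Or.inr ⟨c, hc, ?_⟩
      rw [hrep, h c (by simpa [hrep] using Submodule.neg_mem _ hα.2)]

lemma paraSystem_posRoots (hαp : αp ∈ R.Δ) :
    (R.paraSystem hαp).posRoots = R.posRoots ∩ R.paraRoots αp := by
  ext γ
  constructor
  · rintro ⟨hγ, c, hc, hrep⟩
    refine ⟨⟨hγ.1, update c αp 0, fun β => ?_, hrep.trans (sum_erase_smul_eq_sum_update hαp c)⟩,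
      hγ⟩
    rw [update_apply]
    split_ifs
    exacts [le_rfl, hc β]
  · rintro ⟨⟨-, c, hc, hrep⟩, hγ⟩
    refine ⟨hγ, c, hc, ?_⟩
    have hc0 := (sum_smul_mem_span_iff hαp c).mp (hrep ▸ hγ.2)
    rw [hrep, sum_smul_eq_add_sum_erase hαp, hc0, zero_smul, zero_add]
    rfl

lemma paraSystem_negRoots (hαp : αp ∈ R.Δ) :
    (R.paraSystem hαp).negRoots = R.negRoots ∩ R.paraRoots αp := by
  ext γ
  simp only [negRoots, mem_ofPred_eq, paraSystem_posRoots hαp, mem_inter_iff, neg_mem_paraRoots]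

lemma IsParaLongest.isLongest_paraSystem (hαp : αp ∈ R.Δ) {wp : V ≃ₗ[ℝ] V}
    (hwp : R.IsParaLongest αp wp) :
    (R.paraSystem hαp).IsLongest wp := by
  have hlength (w : V ≃ₗ[ℝ] V) : (R.paraSystem hαp).length w = R.paraLength αp w := by
    rw [length, paraLength, paraSystem_posRoots hαp, paraSystem_negRoots hαp]
  refine ⟨hwp.1, fun w hw => ?_⟩
  rw [hlength, hlength]
  exact hwp.2 w hw

lemma IsParaLongest.neg_apply_mem_base_diff_iff (hαp : αp ∈ R.Δ) {wp : V ≃ₗ[ℝ] V}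
    (hwp : R.IsParaLongest αp wp) {x : V} :
    -wp x ∈ (↑R.Δ \ {αp} : Set V) ↔ x ∈ (↑R.Δ \ {αp} : Set V) := by
  have h := (hwp.isLongest_paraSystem hαp).apply_mem_base_iff (x := -x)
  rw [neg_neg, map_neg] at h
  simpa [paraSystem, and_comm] using h

lemma IsParaLongest.image_neg_symm_preimage_sdiff (hαp : αp ∈ R.Δ) {wp : V ≃ₗ[ℝ] V}
    (hwp : R.IsParaLongest αp wp) {w₀ w : V ≃ₗ[ℝ] V} {A : Set V}
    (hw₀A : ∀ z, w₀ z ∈ A ↔ -z ∈ A) :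
    (fun x => -wp.symm x) '' ((⇑w ⁻¹' A) \ (↑R.Δ \ {αp}))
      = (⇑(w₀ * w * wp) ⁻¹' A) \ (↑R.Δ \ {αp}) := by
  rw [image_eq_preimage_of_inverse (g := fun y => -wp y) (fun x => by simp) (fun y => by simp)]
  ext y
  simp only [mem_preimage, mem_sdiff, LinearEquiv.mul_apply, hw₀A, map_neg,
    hwp.neg_apply_mem_base_diff_iff hαp]

lemma paraWeylGroup_le_weylGroup : R.paraWeylGroup αp ≤ R.weylGroup :=
  (Subgroup.closure_le _).mpr fun _ ⟨α, hα, hw⟩ => Subgroup.subset_closure ⟨α, hα.1, hw⟩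

lemma sub_mem_span_of_mem_paraWeylGroup (hαp : αp ∈ R.Δ) {g : V ≃ₗ[ℝ] V}
    (hg : g ∈ R.paraWeylGroup αp) (x : V) : g x - x ∈ span ℝ (↑R.Δ \ {αp}) := by
  induction hg using (R.paraSystem hαp).weylGroup_induction generalizing x with
  | reflection α hα =>
    rw [rootReflection_apply, sub_sub_cancel_left]
    exact Submodule.neg_mem _ (smul_mem _ _ hα.2)
  | one => simp
  | mul g h _ _ hg hh =>
    rw [LinearEquiv.mul_apply, ← sub_add_sub_cancel]
    exact add_mem (hg _) (hh x)

lemma mapsTo_posRoots_diff_paraRoots (hαp : αp ∈ R.Δ) {g : V ≃ₗ[ℝ] V}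
    (hg : g ∈ R.paraWeylGroup αp) :
    MapsTo g (R.posRoots \ R.paraRoots αp) (R.posRoots \ R.paraRoots αp) := by
  rintro γ ⟨⟨hγΦ, c, hc, hrep⟩, hγp⟩
  have hspan := sub_mem_span_of_mem_paraWeylGroup hαp hg γ
  have hcαp : 0 < c αp := (hc αp).lt_of_ne fun h => hγp
    ⟨hγΦ, hrep ▸ (sum_smul_mem_span_iff hαp c).mpr h.symm⟩
  refine ⟨(mem_posRoots_or_mem_negRoots (mapsTo_of_mem_weylGroup
    (paraWeylGroup_le_weylGroup hg) hγΦ)).resolve_right ?_, fun h => hγp ⟨hγΦ, ?_⟩⟩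
  · rintro ⟨-, d, hd, hdrep⟩
    -- the `α_p`-coordinate of `γ - g γ` would be `c α_p + d α_p > 0`
    have := (sum_smul_mem_span_iff hαp (c + d)).mp (by
      simpa [add_smul, Finset.sum_add_distrib, ← hrep, ← hdrep, sub_eq_add_neg]
        using Submodule.neg_mem _ hspan)
    linarith [hd αp, show c αp + d αp = 0 from this]
  · simpa using sub_mem h.2 hspan

lemma IsParaLongest.apply_weylVector (hαp : αp ∈ R.Δ) {wp : V ≃ₗ[ℝ] V}
    (hwp : R.IsParaLongest αp wp) :
    wp R.weylVector = R.weylVector - (2 : ℝ) • (R.paraSystem hαp).weylVector := by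
  have hfin : (R.posRoots \ R.paraRoots αp).Finite := R.posRoots_finite.sdiff
  have hsplit : ∑ᶠ α ∈ R.posRoots, α
      = ∑ᶠ α ∈ (R.paraSystem hαp).posRoots, α + ∑ᶠ α ∈ R.posRoots \ R.paraRoots αp, α := by
    rw [paraSystem_posRoots hαp, finsum_mem_inter_add_sdiff _ R.posRoots_finite]
  have hpara : wp (∑ᶠ α ∈ (R.paraSystem hαp).posRoots, α)
      = -∑ᶠ α ∈ (R.paraSystem hαp).posRoots, α :=
    neg_eq_iff_eq_neg.mp (map_finsum_mem_self_of_image_eq (R.paraSystem hαp).posRoots_finite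
      (-(wp : V →+ V)) (neg_injective.comp wp.injective).injOn
      (hwp.isLongest_paraSystem hαp).neg_image_posRoots)
  have hrest : wp (∑ᶠ α ∈ R.posRoots \ R.paraRoots αp, α)
      = ∑ᶠ α ∈ R.posRoots \ R.paraRoots αp, α :=
    map_finsum_mem_self_of_image_eq hfin (wp : V →+ V) wp.injective.injOn
      (image_eq_self_of_mapsTo hfin wp.injective.injOn
        (mapsTo_posRoots_diff_paraRoots hαp hwp.1))
  rw [weylVector, weylVector, map_smul, hsplit, map_add, hpara, hrest]
  module

end Parabolic

lemma copair_eq_zero_of_forall_base {v : V} (h : ∀ β ∈ R.Δ, copair v β = 0) {α : V}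
    (hα : α ∈ R.Φ) : copair v α = 0 := by
  have hspan : span ℝ (R.Δ : Set V) ≤ LinearMap.ker (innerₛₗ ℝ v) := span_le.mpr fun β hβ =>
    (copair_eq_zero_iff (ne_zero_of_mem (R.base_subset hβ)) v).mp (h β hβ)
  exact (copair_eq_zero_iff (ne_zero_of_mem hα) v).mpr (hspan (R.mem_span_base hα))

section FundamentalWeight

open Classical in
variable (R) in
def IsFundamentalWeight (αp lam : V) : Prop :=
  ∀ β ∈ R.Δ, copair lam β = if β = αp then 1 else 0

variable {αp lam : V}

lemma copair_apply_of_mem_paraWeylGroup (hlam : R.IsFundamentalWeight αp lam)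
    (hαp : αp ∈ R.Δ) {g : V ≃ₗ[ℝ] V} (hg : g ∈ R.paraWeylGroup αp) (x : V) :
    copair lam (g x) = copair lam x := by
  have hspan : span ℝ (↑R.Δ \ {αp}) ≤ LinearMap.ker (innerₛₗ ℝ lam) :=
    span_le.mpr fun β ⟨hβ, (hβαp : β ≠ αp)⟩ => by
      have := hlam β hβ
      rw [if_neg hβαp] at this
      exact (copair_eq_zero_iff (ne_zero_of_mem (R.base_subset hβ)) lam).mp this
  have hinner : ⟪lam, g x⟫ = ⟪lam, x⟫ := by
    have := hspan (sub_mem_span_of_mem_paraWeylGroup hαp hg x)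
    rw [LinearMap.mem_ker, innerₛₗ_apply_apply, inner_sub_right, sub_eq_zero] at this
    exact this
  have hnorm := inner_apply_apply_of_mem_weylGroup (paraWeylGroup_le_weylGroup hg) x x
  simp only [copair, hinner, hnorm]

/-- Paired with `α^∨`, this is the identity `c_p λ_p - w_p ρ = ρ`. -/
lemma copair_weylVector_sub (hlam : R.IsFundamentalWeight αp lam) (hαp : αp ∈ R.Δ) {α : V}
    (hα : α ∈ R.Φ) :
    2 * copair R.weylVector α - 2 * copair (R.paraSystem hαp).weylVector α
      = 2 * copair (lam - (R.paraSystem hαp).weylVector) αp * copair lam α := by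
  set ρp := (R.paraSystem hαp).weylVector
  set cp := 2 * copair (lam - ρp) αp
  have hbase (β : V) (hβ : β ∈ R.Δ) :
      copair ((2 : ℝ) • R.weylVector - (2 : ℝ) • ρp - cp • lam) β = 0 := by
    simp only [copair_sub_left, copair_smul_left, R.copair_weylVector hβ, hlam β hβ, cp]
    split_ifs with hβαp
    · subst hβαp
      rw [hlam β hβ, if_pos rfl]
      ring
    · have hβp : β ∈ (R.paraSystem hαp).Δ := by
        classical exact Finset.mem_erase.mpr ⟨hβαp, hβ⟩
      rw [(R.paraSystem hαp).copair_weylVector hβp]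
      ring
  have h := copair_eq_zero_of_forall_base hbase hα
  simp only [copair_sub_left, copair_smul_left] at h
  linarith

lemma affine_apply_neg_symm_eq (hlam : R.IsFundamentalWeight αp lam) (hαp : αp ∈ R.Δ)
    {wp : V ≃ₗ[ℝ] V} (hwp : R.IsParaLongest αp wp) {x : V} (hx : x ∈ R.Φ) (s : ℝ) :
    copair lam (-wp.symm x) * s + copair R.weylVector (-wp.symm x)
      = copair lam x * (-(2 * copair (lam - (R.paraSystem hαp).weylVector) αp) - s)
        + copair R.weylVector x := by
  have hlamx : copair lam (wp.symm x) = copair lam x :=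
    copair_apply_of_mem_paraWeylGroup hlam hαp (inv_mem hwp.1) x
  have hρx : copair R.weylVector (wp.symm x)
      = copair R.weylVector x - 2 * copair (R.paraSystem hαp).weylVector x := by
    rw [← copair_apply_apply_of_mem_weylGroup (paraWeylGroup_le_weylGroup hwp.1),
      LinearEquiv.apply_symm_apply, hwp.apply_weylVector hαp, copair_sub_left,
      copair_smul_left]
  simp only [copair_neg_right, hlamx, hρx]
  linear_combination (-1 : ℝ) * copair_weylVector_sub hlam hαp hx

end FundamentalWeight

end RootSystemBase

open RootSystemBase Classical in
/-- Involution symmetry of the sets of affine-linear functions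
`S_{p,A}(s; w) = {s ↦ ⟨λ_p, α^∨⟩ s + ⟨ρ, α^∨⟩ : α ∈ (w⁻¹A) \ Δ_p}`:
for `A = Δ` or `A = Φ⁻`, `S_{p,A}(-c_p - s; w) = S_{p,A}(s; w₀ w w_p)`. -/
theorem S_involution {V : Type*} [NormedAddCommGroup V]
    [InnerProductSpace ℝ V] (R : RootSystemBase V) (αp : V) (hαp : αp ∈ R.Δ)
    (lam ρ ρp : V)
    (hlam : ∀ β ∈ R.Δ, copair lam β = if β = αp then 1 else 0)
    (hρ : ρ = (2⁻¹ : ℝ) • ∑ᶠ α ∈ R.posRoots, α)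
    (hρp : ρp = (2⁻¹ : ℝ) • ∑ᶠ α ∈ R.posRoots ∩ R.paraRoots αp, α)
    (w₀ wp : V ≃ₗ[ℝ] V) (hw₀ : R.IsLongest w₀) (hwp : R.IsParaLongest αp wp)
    (cp : ℝ) (hcp : cp = 2 * copair (lam - ρp) αp)
    (w : V ≃ₗ[ℝ] V) (hw : w ∈ R.weylGroup)
    (A : Set V) (hA : A = ↑R.Δ ∨ A = R.negRoots) :
    (fun f : ℝ → ℝ => fun s => f (-cp - s)) ''
        ((fun α => fun s : ℝ => copair lam α * s + copair ρ α) ''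
          ((⇑w ⁻¹' A) \ (↑R.Δ \ {αp})))
      = (fun α => fun s : ℝ => copair lam α * s + copair ρ α) ''
          ((⇑(w₀ * w * wp) ⁻¹' A) \ (↑R.Δ \ {αp})) := by
  obtain rfl : ρ = R.weylVector := hρ
  obtain rfl : ρp = (R.paraSystem hαp).weylVector := by
    rw [hρp, weylVector, paraSystem_posRoots hαp]
  subst hcp
  have hAΦ : A ⊆ R.Φ := by
    rcases hA with rfl | rfl
    exacts [R.base_subset, R.negRoots_subset]
  have hw₀A (z : V) : w₀ z ∈ A ↔ -z ∈ A := by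
    rcases hA with rfl | rfl
    exacts [hw₀.apply_mem_base_iff, hw₀.apply_mem_negRoots_iff]
  rw [← hwp.image_neg_symm_preimage_sdiff hαp hw₀A, Set.image_image, Set.image_image]
  refine Set.image_congr fun x hx => funext fun s => ?_
  have hxΦ : x ∈ R.Φ := (apply_mem_iff_of_mem_weylGroup hw).mp (hAΦ hx.1)
  exact (affine_apply_neg_symm_eq hlam hαp hwp hxΦ s).symm
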